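/- Let c ∈ ℂ^{ℤ_d×ℤ_d} and m ∈ ℤ_d. Then Tc = vv* for some v ∈ ℂ^d with v_m ≠ 0 if and only if p_0(ω^m) is real and positive and p_{j−k}(ω^k) = p_{j−m}(ω^m)·conj(p_{k−m}(ω^m)) / p_0(ω^m) for all j,k ∈ ℤ_d (all subscripts mod d). -/

import Mathlib

/-!
The `(a, b)` entry of `Tc` is `p_{a-b}(ω^b) / d`: only the shifts `S^j` with `j = b - a` reach
that entry, and the modulations `Ω^k` contribute the powers `conj(ω^a)^k = (ω^a)^{-k}` of the
symbol. So `d • Tc` is the matrix `A_{jk} = p_{j-k}(ω^k)`, and the criterion is the usual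
description of the matrices `v v*` with `v_m ≠ 0`: then `A_{mm} = |v_m|²`, and conversely
`v = A e_m / √A_{mm}` works.
-/

open Matrix Complex

/-- `ω = exp(2πi/d)`, a primitive `d`-th root of unity. -/
noncomputable def omegaRoot (d : ℕ) : ℂ := Complex.exp (2 * Real.pi * Complex.I / d)

/-- The cyclic shift matrix `S`, `S_{jk} = δ_{j,k+1}`. -/
def Smat (d : ℕ) [NeZero d] : Matrix (ZMod d) (ZMod d) ℂ :=
  Matrix.of fun j k => if j = k + 1 then 1 else 0

/-- The modulation matrix `Ω`, `Ω_{jk} = ω^j δ_{jk}`. -/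
noncomputable def Omat (d : ℕ) [NeZero d] : Matrix (ZMod d) (ZMod d) ℂ :=
  Matrix.of fun j k => if j = k then omegaRoot d ^ j.val else 0

/-- The reconstruction operator `T`, `Tc = (1/d) Σ_{j,k} c_{jk} (S^j Ω^k)^*`. -/
noncomputable def Trec (d : ℕ) [NeZero d] (c : Matrix (ZMod d) (ZMod d) ℂ) :
    Matrix (ZMod d) (ZMod d) ℂ :=
  (1 / (d : ℂ)) • ∑ j : ZMod d, ∑ k : ZMod d, c j k • (Smat d ^ j.val * Omat d ^ k.val)ᴴ

/-- The `j`-th symbol of `c`: `p_j(z) = Σ_r c_{-j,r} (ω^j z)^{-r}`. -/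
noncomputable def symb (d : ℕ) [NeZero d] (c : Matrix (ZMod d) (ZMod d) ℂ)
    (j : ZMod d) (z : ℂ) : ℂ :=
  ∑ r : ZMod d, c (-j) r * (omegaRoot d ^ j.val * z) ^ (-(r.val : ℤ))

open ComplexConjugate

section RankOne

variable {𝕜 n : Type*} [RCLike 𝕜]

open RCLike in
theorem Matrix.exists_vecMulVec_star_iff (A : Matrix n n 𝕜) (m : n) :
    (∃ v : n → 𝕜, A = vecMulVec v (star v) ∧ v m ≠ 0) ↔
      im (A m m) = 0 ∧ 0 < re (A m m) ∧
        ∀ j k, A j k = A j m * conj (A k m) / A m m := by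
  constructor
  · rintro ⟨v, rfl, hvm⟩
    have hdiag : vecMulVec v (star v) m m = (‖v m‖ ^ 2 : ℝ) := by
      simp [vecMulVec_apply, RCLike.mul_conj]
    refine ⟨by simp [hdiag], ?_, fun j k => ?_⟩
    · rw [hdiag, RCLike.ofReal_re]
      exact pow_pos (norm_pos_iff.mpr hvm) 2
    have hconj : conj (v m) ≠ 0 := by simpa using hvm
    simp only [vecMulVec_apply, Pi.star_apply, RCLike.star_def, map_mul, RCLike.conj_conj]
    field_simp
  · rintro ⟨him, hre, hA⟩
    have hdiag : ((re (A m m) : ℝ) : 𝕜) = A m m := by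
      rw [← RCLike.conj_eq_iff_re, RCLike.conj_eq_iff_im, him]
    set t := √(re (A m m))
    have ht : (0 : ℝ) < t := Real.sqrt_pos.mpr hre
    have htt : ((t : ℝ) : 𝕜) * t = A m m := by
      rw [← RCLike.ofReal_mul, Real.mul_self_sqrt hre.le, hdiag]
    refine ⟨fun j => A j m / t, ?_, ?_⟩
    · ext j k
      rw [hA j k, vecMulVec_apply]
      simp only [Pi.star_apply, RCLike.star_def, map_div₀, RCLike.conj_ofReal]
      rw [div_mul_div_comm, htt]
    · have : A m m ≠ 0 := fun h => by simp [h] at hre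
      simp [this, ht.ne']

theorem Matrix.vecMulVec_real_smul_star (a : ℝ) (v : n → 𝕜) :
    vecMulVec (a • v) (star (a • v)) = (a * a) • vecMulVec v (star v) := by
  ext j k
  simp only [vecMulVec_apply, Pi.star_apply, Pi.smul_apply, star_smul, star_trivial, smul_apply]
  rw [smul_mul_smul_comm]

theorem Matrix.exists_vecMulVec_star_smul_iff {r : ℝ} (hr : 0 < r) (A : Matrix n n 𝕜) (m : n) :
    (∃ v : n → 𝕜, r • A = vecMulVec v (star v) ∧ v m ≠ 0) ↔
      ∃ v : n → 𝕜, A = vecMulVec v (star v) ∧ v m ≠ 0 := by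
  have hs : √r ≠ 0 := (Real.sqrt_pos.mpr hr).ne'
  constructor
  · rintro ⟨v, hv, hvm⟩
    refine ⟨(√r)⁻¹ • v, ?_, by simp [hvm, hs]⟩
    rw [vecMulVec_real_smul_star, ← hv, smul_smul, ← mul_inv, Real.mul_self_sqrt hr.le,
      inv_mul_cancel₀ hr.ne', one_smul]
  · rintro ⟨v, rfl, hvm⟩
    refine ⟨√r • v, ?_, by simp [hvm, hs]⟩
    rw [vecMulVec_real_smul_star, Real.mul_self_sqrt hr.le]

end RankOne

theorem conj_omegaRoot (d : ℕ) : conj (omegaRoot d) = (omegaRoot d)⁻¹ := by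
  rw [omegaRoot, ← Complex.exp_conj, ← Complex.exp_neg]
  congr 1
  simp only [map_div₀, map_mul, Complex.conj_I, Complex.conj_ofReal, map_ofNat, map_natCast]
  ring

section WeylHeisenberg

variable (d : ℕ) [NeZero d]

theorem omegaRoot_pow_self : omegaRoot d ^ d = 1 := by
  rw [omegaRoot, ← Complex.exp_nat_mul, mul_div_cancel₀ _ (NeZero.natCast_ne d ℂ),
    Complex.exp_two_pi_mul_I]

theorem omegaRoot_pow_val_add (x y : ZMod d) :
    omegaRoot d ^ (x + y).val = omegaRoot d ^ x.val * omegaRoot d ^ y.val := by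
  rw [← pow_add, pow_eq_pow_mod (x.val + y.val) (omegaRoot_pow_self d), ← ZMod.val_add]

theorem Smat_pow_apply (n : ℕ) (j k : ZMod d) :
    (Smat d ^ n) j k = if j = k + n then 1 else 0 := by
  induction n generalizing j k with
  | zero => simp [Matrix.one_apply]
  | succ n ih =>
    rw [pow_succ, Matrix.mul_apply, Finset.sum_eq_single (k + 1)]
    · rw [ih]
      simp [Smat, add_assoc, add_comm (1 : ZMod d)]
    · intro b _ hb
      simp [Smat, hb]
    · simp

theorem Smat_pow_mul_Omat_pow_apply (n l : ℕ) (j k : ZMod d) :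
    (Smat d ^ n * Omat d ^ l) j k = if j = k + n then (omegaRoot d ^ k.val) ^ l else 0 := by
  have hOmat : Omat d = Matrix.diagonal (fun j => omegaRoot d ^ j.val) := by
    ext j k
    by_cases h : j = k <;> simp [Omat, h]
  rw [hOmat, Matrix.diagonal_pow, Matrix.mul_diagonal, Smat_pow_apply]
  simp

theorem Trec_apply (c : Matrix (ZMod d) (ZMod d) ℂ) (a b : ZMod d) :
    Trec d c a b = symb d c (a - b) (omegaRoot d ^ b.val) / d := by
  have hshift (j k : ZMod d) : (Smat d ^ j.val * Omat d ^ k.val)ᴴ a b =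
      if j = b - a then conj (omegaRoot d ^ a.val) ^ k.val else 0 := by
    simp only [conjTranspose_apply, Smat_pow_mul_Omat_pow_apply, ZMod.natCast_zmod_val,
      eq_sub_iff_add_eq', eq_comm (a := b)]
    split_ifs <;> simp
  have hsymb (r : ZMod d) : (omegaRoot d ^ (a - b).val * omegaRoot d ^ b.val) ^ (-(r.val : ℤ)) =
      conj (omegaRoot d ^ a.val) ^ r.val := by
    rw [← omegaRoot_pow_val_add, sub_add_cancel, _root_.zpow_neg, zpow_natCast, map_pow,
      conj_omegaRoot, inv_pow, inv_pow]
  simp only [Trec, symb, Matrix.smul_apply, Matrix.sum_apply, hshift, hsymb, smul_eq_mul, mul_ite,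
    mul_zero, neg_sub]
  rw [Finset.sum_comm, Finset.sum_congr rfl fun k _ => Finset.sum_ite_eq' _ _ _]
  simp [div_eq_inv_mul]

end WeylHeisenberg

theorem stmt14_general (d : ℕ) [NeZero d] (c : Matrix (ZMod d) (ZMod d) ℂ) (m : ZMod d) :
    (∃ v : ZMod d → ℂ, Trec d c = Matrix.vecMulVec v (star v) ∧ v m ≠ 0) ↔
    ((symb d c 0 (omegaRoot d ^ m.val)).im = 0 ∧
      0 < (symb d c 0 (omegaRoot d ^ m.val)).re ∧
      ∀ j k : ZMod d,
        symb d c (j - k) (omegaRoot d ^ k.val)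
          = symb d c (j - m) (omegaRoot d ^ m.val)
              * (starRingEnd ℂ) (symb d c (k - m) (omegaRoot d ^ m.val))
              / symb d c 0 (omegaRoot d ^ m.val)) := by
  have hd : (0 : ℝ) < d := Nat.cast_pos.mpr (NeZero.pos d)
  have hentry (j k : ZMod d) :
      ((d : ℝ) • Trec d c) j k = symb d c (j - k) (omegaRoot d ^ k.val) := by
    rw [Matrix.smul_apply, Trec_apply, Complex.real_smul, Complex.ofReal_natCast,
      mul_div_cancel₀ _ (NeZero.natCast_ne d ℂ)]
  rw [← exists_vecMulVec_star_smul_iff hd, exists_vecMulVec_star_iff]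
  simp only [hentry, sub_self, RCLike.re_to_complex, RCLike.im_to_complex]

theorem stmt14 (d : ℕ) [NeZero d] (hd : 2 ≤ d) (c : Matrix (ZMod d) (ZMod d) ℂ) (m : ZMod d) :
    (∃ v : ZMod d → ℂ, Trec d c = Matrix.vecMulVec v (star v) ∧ v m ≠ 0) ↔
    ((symb d c 0 (omegaRoot d ^ m.val)).im = 0 ∧
      0 < (symb d c 0 (omegaRoot d ^ m.val)).re ∧
      ∀ j k : ZMod d,
        symb d c (j - k) (omegaRoot d ^ k.val)
          = symb d c (j - m) (omegaRoot d ^ m.val)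
              * (starRingEnd ℂ) (symb d c (k - m) (omegaRoot d ^ m.val))
              / symb d c 0 (omegaRoot d ^ m.val)) :=
  stmt14_general d c m
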